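/- For the regular language L = (00+11)^+ over {0,1}, the binary decimation bd(L) = {ww : w ∈ {0,1}^+}, which is not context-free. Hence neither the regular nor context-free languages are closed under bd. -/

import Mathlib

mutual
/-- The odd-indexed letters a₁a₃a₅⋯ of a word. -/
def odds {α : Type*} : List α → List α
  | [] => []
  | a :: l => a :: evens l
/-- The even-indexed letters a₂a₄a₆⋯ of a word. -/
def evens {α : Type*} : List α → List α
  | [] => []
  | _ :: l => odds l
end

/-- Binary decimation: the odd-indexed letters followed by the even-indexed
letters. -/
def bd {α : Type*} (w : List α) : List α := odds w ++ evens w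

/-- Binary decimation of a language, elementwise. -/
def bdLang {α : Type*} (L : Language α) : Language α := {z | ∃ w ∈ L, z = bd w}

/-!
The doubling morphism `a ↦ aa` maps the nonempty words onto `(00 + 11)⁺`, and both halves of
the binary decimation of a doubled word give back the original word, so `bd((00 + 11)⁺)` is the
copy language `{ww : w ≠ ε}`.

The copy language is not context-free: by the pumping lemma (in its pump-down form) some
factorisation `0ⁿ1ⁿ0ⁿ1ⁿ = uvxyw` with `|vxy| < n` and `vy ≠ ε` would make `uxw` a square, but
comparing `uxw` with its shift by half its length puts a `0` against a `1`, wherever the window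
`vxy` lies. As `(00 + 11)⁺` is regular and the transition graph of a DFA over a finite alphabet
is a right-linear grammar, neither the regular nor the context-free languages are closed
under `bd`.
-/

section Decimation

variable {α : Type*}

def doubleLetters (s : List α) : List α := s.flatMap fun a => [a, a]

@[simp] lemma doubleLetters_nil : doubleLetters ([] : List α) = [] := rfl

@[simp] lemma doubleLetters_cons (a : α) (s : List α) :
    doubleLetters (a :: s) = a :: a :: doubleLetters s := rfl

@[simp] lemma doubleLetters_eq_nil {s : List α} : doubleLetters s = [] ↔ s = [] := by
  cases s <;> simp

lemma cons_cons_eq_doubleLetters {a a' : α} {w s : List α} :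
    a :: a' :: w = doubleLetters s ↔ a = a' ∧ ∃ s', s = a :: s' ∧ w = doubleLetters s' := by
  cases s with
  | nil => simp
  | cons c s => simp only [doubleLetters_cons, List.cons.injEq]; aesop

lemma odds_doubleLetters : ∀ s : List α, odds (doubleLetters s) = s
  | [] => rfl
  | a :: s => by simp [odds, evens, odds_doubleLetters s]

lemma evens_doubleLetters : ∀ s : List α, evens (doubleLetters s) = s
  | [] => rfl
  | a :: s => by simp [odds, evens, evens_doubleLetters s]

lemma bd_doubleLetters (s : List α) : bd (doubleLetters s) = s ++ s := by
  rw [bd, odds_doubleLetters, evens_doubleLetters]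

def copyLanguage (α : Type*) : Language α := {z | ∃ w : List α, w ≠ [] ∧ z = w ++ w}

theorem bdLang_doubleLetters :
    bdLang {z : List α | ∃ s, s ≠ [] ∧ z = doubleLetters s} = copyLanguage α := by
  ext z
  constructor
  · rintro ⟨_, ⟨s, hs, rfl⟩, rfl⟩
    exact ⟨s, hs, bd_doubleLetters s⟩
  · rintro ⟨s, hs, rfl⟩
    exact ⟨_, ⟨s, hs, rfl⟩, (bd_doubleLetters s).symm⟩

lemma flatten_map_pair (s : List α) :
    (s.map fun a => [a, a]).flatten = doubleLetters s :=
  List.flatMap_def.symm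

lemma exists_eq_map_pair {l : List (List α)} (h : ∀ u ∈ l, ∃ a, u = [a, a]) :
    ∃ s : List α, l = s.map fun a => [a, a] := by
  induction l with
  | nil => exact ⟨[], rfl⟩
  | cons u l ih =>
    obtain ⟨a, rfl⟩ := h u (by simp)
    obtain ⟨s, rfl⟩ := ih fun v hv => h v (by simp [hv])
    exact ⟨a :: s, rfl⟩

end Decimation

lemma setOf_flatten_pairs_eq :
    {w : List (Fin 2) | ∃ l : List (List (Fin 2)), l ≠ [] ∧
        (∀ u ∈ l, u = [0, 0] ∨ u = [1, 1]) ∧ w = l.flatten} =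
      {z | ∃ s, s ≠ [] ∧ z = doubleLetters s} := by
  ext w
  constructor
  · rintro ⟨l, hl, hpairs, rfl⟩
    obtain ⟨s, rfl⟩ := exists_eq_map_pair fun u hu => by
      rcases hpairs u hu with rfl | rfl
      exacts [⟨0, rfl⟩, ⟨1, rfl⟩]
    exact ⟨s, by simpa using hl, (flatten_map_pair s).symm⟩
  · rintro ⟨s, hs, rfl⟩
    refine ⟨s.map fun a => [a, a], by simpa using hs, ?_, (flatten_map_pair s).symm⟩
    simp only [List.mem_map]
    rintro _ ⟨a, -, rfl⟩
    fin_cases a <;> simp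

section DoubleLettersRegular

variable {α : Type*} [DecidableEq α]

/-- `some (.inl b)`: between blocks, `b` recording whether a block has been read;
`some (.inr a)`: inside a block that began with `a`; `none`: rejecting sink. -/
def doubleLettersDFA : DFA α (Option (Bool ⊕ α)) where
  step
    | some (.inl _), a => some (.inr a)
    | some (.inr a), b => if a = b then some (.inl true) else none
    | none, _ => none
  start := some (.inl false)
  accept := {some (.inl true)}

lemma doubleLettersDFA_evalFrom_none (w : List α) : doubleLettersDFA.evalFrom none w = none := by
  induction w with
  | nil => rfl
  | cons a w ih => exact ih

lemma mem_acceptsFrom_doubleLettersDFA (b : Bool) : ∀ w : List α,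
    w ∈ doubleLettersDFA.acceptsFrom (some (.inl b)) ↔
      ∃ s, (b ∨ s ≠ []) ∧ w = doubleLetters s
  | [] => by simp [DFA.mem_acceptsFrom, doubleLettersDFA, eq_comm (a := ([] : List α))]
  | [a] => by
    simp only [doubleLettersDFA, DFA.mem_acceptsFrom, DFA.evalFrom_cons, DFA.evalFrom_nil,
      Set.mem_singleton_iff, Option.some.injEq, reduceCtorEq, false_iff, not_exists, not_and]
    rintro (_ | ⟨c, s⟩) _ <;> simp
  | a :: a' :: w => by
    rw [DFA.mem_acceptsFrom, DFA.evalFrom_cons, DFA.evalFrom_cons]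
    change doubleLettersDFA.evalFrom (if a = a' then some (.inl true) else none) w ∈ _ ↔ _
    simp only [cons_cons_eq_doubleLetters]
    split_ifs with h
    · rw [← DFA.mem_acceptsFrom, mem_acceptsFrom_doubleLettersDFA true w]
      simp [h]
    · rw [doubleLettersDFA_evalFrom_none]
      simp [doubleLettersDFA, h]

end DoubleLettersRegular

theorem isRegular_doubleLetters {α : Type*} [Fintype α] :
    Language.IsRegular {z : List α | ∃ s, s ≠ [] ∧ z = doubleLetters s} := by
  classical
  refine Language.isRegular_iff.2 ⟨_, inferInstance, doubleLettersDFA, ?_⟩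
  ext w
  exact (mem_acceptsFrom_doubleLettersDFA false w).trans (by simp; rfl)

namespace ContextFreeGrammar

inductive ParseTree (T N : Type*) where
  | leaf (a : T)
  | node (A : N) (children : List (ParseTree T N))

namespace ParseTree
variable {T N : Type*}

def root : ParseTree T N → Symbol T N
  | leaf a => .terminal a
  | node A _ => .nonterminal A

def yield : ParseTree T N → List T
  | leaf a => [a]
  | node _ c => c.flatMap yield

def height : ParseTree T N → ℕ
  | leaf _ => 0
  | node _ c => (c.map height).foldr max 0 + 1

def size : ParseTree T N → ℕ
  | leaf _ => 1
  | node _ c => (c.map size).sum + 1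

variable {s t : ParseTree T N} {A : N} {c : List (ParseTree T N)}

lemma height_lt_of_mem (h : t ∈ c) : t.height < (node A c).height := by
  rw [height]
  exact Nat.lt_succ_of_le (List.le_max_of_le (List.mem_map_of_mem (f := height) h) le_rfl)

lemma height_node_le {k : ℕ} (h : ∀ t ∈ c, t.height ≤ k) : (node A c).height ≤ k + 1 := by
  rw [height]
  exact Nat.succ_le_succ (List.max_le_of_forall_le (c.map height) k (by simpa using h))

lemma size_lt_of_mem (h : t ∈ c) : t.size < (node A c).size := by
  rw [size]
  exact Nat.lt_succ_of_le (List.le_sum_of_mem (List.mem_map_of_mem (f := size) h))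

inductive IsSubtree : ParseTree T N → ParseTree T N → Prop
  | refl (t : ParseTree T N) : IsSubtree t t
  | child {s m : ParseTree T N} {A : N} {c : List (ParseTree T N)} :
      IsSubtree s m → m ∈ c → IsSubtree s (node A c)

lemma IsSubtree.size_le (h : s.IsSubtree t) : s.size ≤ t.size := by
  induction h with
  | refl => rfl
  | child _ hm ih => exact ih.trans (size_lt_of_mem hm).le

lemma IsSubtree.height_le (h : s.IsSubtree t) : s.height ≤ t.height := by
  induction h with
  | refl => rfl
  | child _ hm ih => exact ih.trans (height_lt_of_mem hm).le

end ParseTree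

open ParseTree

variable {T : Type*} {g : ContextFreeGrammar T}

inductive IsParseTree (g : ContextFreeGrammar T) : ParseTree T g.NT → Prop
  | leaf (a : T) : IsParseTree g (.leaf a)
  | node {A : g.NT} {c : List (ParseTree T g.NT)} (hA : ⟨A, c.map root⟩ ∈ g.rules)
      (hc : ∀ t ∈ c, IsParseTree g t) : IsParseTree g (.node A c)

lemma derives_flatMap {ι : Type*} {l : List ι} {f h : ι → List (Symbol T g.NT)}
    (hl : ∀ i ∈ l, g.Derives (f i) (h i)) : g.Derives (l.flatMap f) (l.flatMap h) := by
  induction l with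
  | nil => exact .refl _
  | cons i l ih =>
    simp only [List.flatMap_cons]
    exact ((hl i (by simp)).append_right _).trans
      ((ih fun j hj => hl j (by simp [hj])).append_left _)

lemma IsParseTree.derives {t : ParseTree T g.NT} (ht : g.IsParseTree t) :
    g.Derives [t.root] (t.yield.map .terminal) := by
  induction ht with
  | leaf a => simpa [root, yield] using Derives.refl _
  | @node A c hA _ ih =>
    have hstep : g.Produces [.nonterminal A] (c.map root) := ⟨_, hA, .input_output⟩
    rw [List.map_eq_flatMap] at hstep
    simpa [root, yield, List.map_flatMap] using hstep.trans_derives (derives_flatMap ih)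

lemma IsParseTree.mem_language {t : ParseTree T g.NT} (ht : g.IsParseTree t)
    (hroot : t.root = .nonterminal g.initial) : t.yield ∈ g.language := by
  simpa [hroot] using ht.derives

lemma exists_forest_of_derives {u : List (Symbol T g.NT)} {w : List T}
    (h : g.Derives u (w.map .terminal)) :
    ∃ ts : List (ParseTree T g.NT),
      (∀ t ∈ ts, g.IsParseTree t) ∧ ts.map root = u ∧ ts.flatMap yield = w := by
  induction h using Relation.ReflTransGen.head_induction_on with
  | refl =>
    exact ⟨w.map .leaf, by simp [IsParseTree.leaf], by simp [Function.comp_def, root],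
      by simp [List.flatMap_map, yield]⟩
  | head hp _ ih =>
    obtain ⟨ts, hts, hroot, rfl⟩ := ih
    obtain ⟨r, hr, hrw⟩ := hp
    obtain ⟨p, q, rfl, rfl⟩ := hrw.exists_parts
    obtain ⟨tpr, tq, rfl, hpr, rfl⟩ := List.map_eq_append_iff.1 hroot
    obtain ⟨tp, tr, rfl, rfl, hr'⟩ := List.map_eq_append_iff.1 hpr
    refine ⟨tp ++ node r.input tr :: tq, ?_, by simp [root], by simp [yield]⟩
    simp only [List.mem_append] at hts
    intro t ht
    rcases List.mem_append.1 ht with ht | ht | ⟨_, ht⟩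
    · exact hts t (.inl (.inl ht))
    · exact .node (by rw [hr']; exact hr) fun t ht => hts t (.inl (.inr ht))
    · exact hts t (.inr ht)

lemma exists_isParseTree_of_mem_language {w : List T} (hw : w ∈ g.language) :
    ∃ t, g.IsParseTree t ∧ t.root = .nonterminal g.initial ∧ t.yield = w := by
  obtain ⟨ts, hts, hroot, rfl⟩ := exists_forest_of_derives hw
  obtain ⟨t, rfl, ht⟩ := List.map_eq_singleton_iff.1 hroot
  exact ⟨t, hts t (by simp), ht, by simp⟩

lemma IsParseTree.of_isSubtree {s t : ParseTree T g.NT} (ht : g.IsParseTree t)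
    (hst : s.IsSubtree t) : g.IsParseTree s := by
  induction hst with
  | refl => exact ht
  | child _ hm ih => cases ht with | node _ hc => exact ih (hc _ hm)

lemma ParseTree.IsSubtree.exists_replace {s t s' : ParseTree T g.NT} (hst : s.IsSubtree t)
    (ht : g.IsParseTree t) (hs' : g.IsParseTree s') (hroot : s'.root = s.root) :
    ∃ t', g.IsParseTree t' ∧ t'.root = t.root ∧ t'.size + s.size = t.size + s'.size ∧
      ∃ u v, t.yield = u ++ s.yield ++ v ∧ t'.yield = u ++ s'.yield ++ v := by
  induction hst with
  | refl => exact ⟨s', hs', hroot, by omega, [], [], by simp, by simp⟩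
  | @child m A c _ hm ih =>
    cases ht with | node hA hc =>
    obtain ⟨m', hm', hroot', hsize, u, v, hu, hv⟩ := ih (hc m hm)
    obtain ⟨c₁, c₂, rfl⟩ := List.append_of_mem hm
    refine ⟨node A (c₁ ++ m' :: c₂), .node ?_ ?_, by simp [root], ?_,
      c₁.flatMap yield ++ u, v ++ c₂.flatMap yield, by simp [yield, hu], by simp [yield, hv]⟩
    · simpa [hroot'] using hA
    · simp only [List.mem_append, List.mem_cons]
      rintro t (ht | rfl | ht)
      · exact hc t (by simp [ht])
      · exact hm'
      · exact hc t (by simp [ht])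
    · simp only [size, List.map_append, List.map_cons, List.sum_append, List.sum_cons]
      omega

/-- `S` stands for the pairwise distinct nonterminals on the path from some ancestor down to `t`. -/
lemma IsParseTree.exists_repeat_or_mem {N₀ : Finset g.NT} (hN₀ : ∀ r ∈ g.rules, r.input ∈ N₀)
    {t : ParseTree T g.NT} (ht : g.IsParseTree t)
    (S : Finset g.NT) (hS : S ⊆ N₀) (hlt : N₀.card < t.height + S.card) :
    (∃ t₁ t₂ : ParseTree T g.NT, t₁.IsSubtree t ∧ t₂.IsSubtree t₁ ∧ t₂.size < t₁.size ∧
        t₂.root = t₁.root) ∨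
      ∃ s : ParseTree T g.NT, s.IsSubtree t ∧ ∃ A ∈ S, s.root = .nonterminal A := by
  classical
  induction ht generalizing S with
  | leaf a =>
    have := Finset.card_le_card hS
    simp [height] at hlt
    omega
  | @node A c hA hc ih =>
    by_cases hAS : A ∈ S
    · exact .inr ⟨_, .refl _, A, hAS, rfl⟩
    have hS' : insert A S ⊆ N₀ := Finset.insert_subset (hN₀ _ hA) hS
    have hcard := Finset.card_le_card hS'
    rw [Finset.card_insert_of_notMem hAS] at hcard
    obtain ⟨m, hm, hmh⟩ : ∃ m ∈ c, N₀.card < m.height + (S.card + 1) := by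
      by_contra! hall
      have := height_node_le (A := A) (k := N₀.card - S.card - 1) fun m hm => by
        have := hall m hm
        omega
      omega
    rcases ih m hm (insert A S) hS' (by rwa [Finset.card_insert_of_notMem hAS]) with
      ⟨t₁, t₂, h₁, h₂⟩ | ⟨s, hs, B, hB, hsB⟩
    · exact .inl ⟨t₁, t₂, h₁.child hm, h₂⟩
    · rcases Finset.mem_insert.1 hB with rfl | hB
      · exact .inl ⟨_, s, .refl _, hs.child hm, hs.size_le.trans_lt (size_lt_of_mem hm), hsB⟩
      · exact .inr ⟨s, hs.child hm, B, hB, hsB⟩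

lemma IsParseTree.exists_repeat {N₀ : Finset g.NT} (hN₀ : ∀ r ∈ g.rules, r.input ∈ N₀)
    {t : ParseTree T g.NT} (ht : g.IsParseTree t) (hh : N₀.card < t.height) :
    ∃ t₁ t₂ : ParseTree T g.NT, t₁.IsSubtree t ∧ t₂.IsSubtree t₁ ∧ t₂.size < t₁.size ∧
      t₂.root = t₁.root ∧ t₁.height ≤ N₀.card + 1 := by
  induction ht with
  | leaf a => simp [height] at hh
  | @node A c hA hc ih =>
    by_cases htall : ∃ m ∈ c, N₀.card < m.height
    · obtain ⟨m, hm, hmh⟩ := htall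
      obtain ⟨t₁, t₂, h₁, h⟩ := ih m hm hmh
      exact ⟨t₁, t₂, h₁.child hm, h⟩
    push Not at htall
    rcases (IsParseTree.node hA hc).exists_repeat_or_mem hN₀ ∅ (Finset.empty_subset _)
      (by simpa using hh) with ⟨t₁, t₂, h₁, h₂, hsize, hroot⟩ | ⟨_, _, _, h, _⟩
    · exact ⟨t₁, t₂, h₁, h₂, hsize, hroot, h₁.height_le.trans (height_node_le htall)⟩
    · simp at h

lemma IsParseTree.length_yield_le {M : ℕ} (hM₀ : 0 < M)
    (hM : ∀ r ∈ g.rules, r.output.length ≤ M) {t : ParseTree T g.NT} (ht : g.IsParseTree t) :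
    t.yield.length ≤ M ^ t.height := by
  induction ht with
  | leaf a => simp [yield, height]
  | @node A c hA _ ih =>
    set H := (c.map height).foldr max 0
    have hc : c.length ≤ M := by simpa using hM _ hA
    have hchild : ∀ n ∈ c.map fun t => t.yield.length, n ≤ M ^ H := by
      simp only [List.mem_map]
      rintro _ ⟨t, ht, rfl⟩
      have := height_lt_of_mem (A := A) ht
      rw [height] at this
      exact (ih t ht).trans (pow_le_pow_right₀ hM₀ (by omega))
    calc (ParseTree.node A c).yield.length = (c.map fun t => t.yield.length).sum := by
          simp [yield, List.length_flatMap]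
      _ ≤ c.length * M ^ H := by simpa using List.sum_le_card_nsmul _ _ hchild
      _ ≤ M * M ^ H := by gcongr
      _ = M ^ (ParseTree.node A c).height := by rw [height, pow_succ']

lemma IsParseTree.exists_pump_down {N₀ : Finset g.NT} (hN₀ : ∀ r ∈ g.rules, r.input ∈ N₀)
    {M : ℕ} (hM₀ : 0 < M) (hM : ∀ r ∈ g.rules, r.output.length ≤ M) {t : ParseTree T g.NT}
    (ht : g.IsParseTree t) (hlen : M ^ (N₀.card + 1) < t.yield.length) :
    ∃ u v x y w, t.yield = u ++ v ++ x ++ y ++ w ∧ (v ++ x ++ y).length ≤ M ^ (N₀.card + 1) ∧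
      v ++ y ≠ [] ∧ ∃ t', g.IsParseTree t' ∧ t'.root = t.root ∧ t'.yield = u ++ x ++ w := by
  induction hsize : t.size using Nat.strong_induction_on generalizing t with | _ n ih =>
  have hh : N₀.card < t.height := by
    by_contra! hle
    exact (hlen.trans_le (ht.length_yield_le hM₀ hM)).not_ge (pow_le_pow_right₀ hM₀ (by omega))
  obtain ⟨t₁, t₂, h₁, h₂, hsize₂, hroot, hheight⟩ := ht.exists_repeat hN₀ hh
  have ht₁ := ht.of_isSubtree h₁
  have ht₂ := ht₁.of_isSubtree h₂
  obtain ⟨t', ht', hroot', hsize', u, w, hyield, hyield'⟩ := h₁.exists_replace ht ht₂ hroot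
  obtain ⟨-, -, -, -, v, y, hyield₁, -⟩ := h₂.exists_replace ht₁ ht₂ rfl
  by_cases hvy : v ++ y = []
  · -- `t'` is a smaller parse tree of the same word: recursing on it replaces the usual choice
    -- of a parse tree of minimal size.
    obtain ⟨rfl, rfl⟩ := List.append_eq_nil_iff.1 hvy
    have hsame : t'.yield = t.yield := by simp [hyield, hyield', hyield₁]
    obtain ⟨u', v', x', y', w', h, hvxy, hvy', t'', ht'', hroot'', hyield''⟩ :=
      ih t'.size (by omega) ht' (hsame ▸ hlen) rfl
    exact ⟨u', v', x', y', w', hsame ▸ h, hvxy, hvy', t'', ht'', hroot''.trans hroot', hyield''⟩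
  · refine ⟨u, v, t₂.yield, y, w, by simp [hyield, hyield₁], ?_, hvy, t', ht', hroot',
      by simp [hyield']⟩
    calc (v ++ t₂.yield ++ y).length = t₁.yield.length := by rw [hyield₁]
      _ ≤ M ^ t₁.height := ht₁.length_yield_le hM₀ hM
      _ ≤ M ^ (N₀.card + 1) := pow_le_pow_right₀ hM₀ hheight

end ContextFreeGrammar

open ContextFreeGrammar in
theorem Language.IsContextFree.exists_pump_down {T : Type*} {L : Language T}
    (hL : L.IsContextFree) :
    ∃ p, ∀ z ∈ L, p < z.length → ∃ u v x y w, z = u ++ v ++ x ++ y ++ w ∧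
      (v ++ x ++ y).length ≤ p ∧ v ++ y ≠ [] ∧ u ++ x ++ w ∈ L := by
  classical
  obtain ⟨g, rfl⟩ := hL
  refine ⟨(g.rules.sup (·.output.length) + 1) ^ ((g.rules.image (·.input)).card + 1),
    fun z hz hlen => ?_⟩
  obtain ⟨t, ht, hroot, rfl⟩ := exists_isParseTree_of_mem_language hz
  obtain ⟨u, v, x, y, w, h, hvxy, hvy, t', ht', hroot', hyield'⟩ :=
    ht.exists_pump_down (fun r hr => Finset.mem_image_of_mem _ hr) (Nat.succ_pos _)
      (fun r hr => Nat.le_succ_of_le (Finset.le_sup (f := (·.output.length)) hr)) hlen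
  exact ⟨u, v, x, y, w, h, hvxy, hvy, hyield' ▸ ht'.mem_language (hroot'.trans hroot)⟩

namespace DFA

open ContextFreeGrammar

variable {T : Type*} {σ : Type} [Fintype T] [Fintype σ] (M : DFA T σ)

open Classical in
noncomputable def toGrammar : ContextFreeGrammar T where
  NT := σ
  initial := M.start
  rules := (Finset.univ.image fun qa : σ × T =>
      ⟨qa.1, [.terminal qa.2, .nonterminal (M.step qa.1 qa.2)]⟩) ∪
    (Finset.univ.filter (· ∈ M.accept)).image fun q => ⟨q, []⟩

lemma mem_toGrammar_rules {r : ContextFreeRule T σ} :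
    r ∈ M.toGrammar.rules ↔ (∃ q a, r = ⟨q, [.terminal a, .nonterminal (M.step q a)]⟩) ∨
      ∃ q ∈ M.accept, r = ⟨q, []⟩ := by
  unfold toGrammar
  simp [eq_comm]

lemma toGrammar_derives {q : σ} {w : List T} (hw : w ∈ M.acceptsFrom q) :
    M.toGrammar.Derives [.nonterminal q] (w.map .terminal) := by
  induction w generalizing q with
  | nil =>
    exact Produces.single ⟨⟨q, []⟩, M.mem_toGrammar_rules.2 (.inr ⟨q, hw, rfl⟩), .input_output⟩
  | cons a w ih =>
    have hstep : M.toGrammar.Produces [.nonterminal q] [.terminal a, .nonterminal (M.step q a)] :=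
      ⟨_, M.mem_toGrammar_rules.2 (.inl ⟨q, a, rfl⟩), .input_output⟩
    exact hstep.trans_derives ((ih hw).append_left [.terminal a])

lemma yield_mem_acceptsFrom {t : ParseTree T M.toGrammar.NT} (ht : M.toGrammar.IsParseTree t)
    {q : σ} (hq : t.root = .nonterminal q) : t.yield ∈ M.acceptsFrom q := by
  induction ht generalizing q with
  | leaf a => simp [ParseTree.root] at hq
  | @node A c hA hc ih =>
    obtain rfl : A = q := Symbol.nonterminal.inj hq
    rcases M.mem_toGrammar_rules.1 hA with ⟨q, a, hr⟩ | ⟨q, hacc, hr⟩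
    · obtain ⟨rfl, hc'⟩ := ContextFreeRule.mk.inj hr
      obtain ⟨t₁, _, rfl, h₁, hc'⟩ := List.map_eq_cons_iff.1 hc'
      obtain ⟨t₂, _, rfl, h₂, hc'⟩ := List.map_eq_cons_iff.1 hc'
      obtain rfl := List.map_eq_nil_iff.1 hc'
      obtain rfl : t₁ = .leaf a := by
        cases t₁ with
        | leaf b => rw [Symbol.terminal.inj h₁]
        | node B _ => simp [ParseTree.root] at h₁
      simp only [ParseTree.yield, List.flatMap_cons, List.flatMap_nil, List.append_nil]
      exact ih t₂ (by simp) h₂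
    · obtain ⟨rfl, hc'⟩ := ContextFreeRule.mk.inj hr
      obtain rfl := List.map_eq_nil_iff.1 hc'
      rw [ParseTree.yield, List.flatMap_nil]
      exact hacc

theorem language_toGrammar : M.toGrammar.language = M.accepts := by
  ext w
  refine ⟨fun hw => ?_, M.toGrammar_derives⟩
  obtain ⟨t, ht, hroot, rfl⟩ := exists_isParseTree_of_mem_language hw
  exact M.yield_mem_acceptsFrom ht hroot

end DFA

theorem Language.IsRegular.isContextFree {T : Type*} [Fintype T] {L : Language T}
    (hL : L.IsRegular) : L.IsContextFree := by
  obtain ⟨σ, _, M, rfl⟩ := hL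
  exact ⟨M.toGrammar, M.language_toGrammar⟩

section CopyLanguage

variable {α : Type*}

lemma getElem?_pumpDown_left {u v x y w : List α} {k : ℕ} (hk : k < u.length) :
    (u ++ x ++ w)[k]? = (u ++ v ++ x ++ y ++ w)[k]? := by
  simp [List.append_assoc, List.getElem?_append_left hk]

lemma getElem?_pumpDown_right {u v x y w : List α} {k : ℕ} (hk : u.length + x.length ≤ k) :
    (u ++ x ++ w)[k]? = (u ++ v ++ x ++ y ++ w)[k + v.length + y.length]? := by
  rw [List.getElem?_append_right (by simpa using hk),
    List.getElem?_append_right (by simp; omega)]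
  congr 1
  simp
  omega

lemma getElem?_append_self {s : List α} {k : ℕ} (hk : k < s.length) :
    (s ++ s)[k]? = (s ++ s)[k + s.length]? := by
  rw [List.getElem?_append_left hk, List.getElem?_append_right (by omega), Nat.add_sub_cancel]

lemma pumpDown_replicate_ne_square {a b : α} (hab : a ≠ b) {n : ℕ} {u v x y w : List α}
    (hz : List.replicate n a ++ List.replicate n b ++ (List.replicate n a ++ List.replicate n b) =
      u ++ v ++ x ++ y ++ w)
    (hvxy : (v ++ x ++ y).length < n) (hvy : v ++ y ≠ []) (s : List α) :
    u ++ x ++ w ≠ s ++ s := by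
  set z := List.replicate n a ++ List.replicate n b ++ (List.replicate n a ++ List.replicate n b)
  have hz_a : ∀ k, k < n ∨ 2 * n ≤ k ∧ k < 3 * n → z[k]? = some a := by
    intro k hk
    simp only [z, List.getElem?_append, List.getElem?_replicate, List.length_append,
      List.length_replicate]
    split_ifs <;> first | rfl | omega
  have hz_b : ∀ k, n ≤ k ∧ k < 2 * n ∨ 3 * n ≤ k ∧ k < 4 * n → z[k]? = some b := by
    intro k hk
    simp only [z, List.getElem?_append, List.getElem?_replicate, List.length_append,
      List.length_replicate]
    split_ifs <;> first | rfl | omega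
  intro hsq
  have hlen : z.length = _ := congrArg List.length hz
  have hslen := congrArg List.length hsq
  have hvy : 0 < v.length + y.length := by simpa using List.length_pos_iff.2 hvy
  simp only [z, List.length_append, List.length_replicate] at hlen hslen hvxy
  have hpre : ∀ k j, k < u.length → j = k → (s ++ s)[k]? = z[j]? := by
    rintro k _ hk rfl
    rw [← hsq, hz, getElem?_pumpDown_left hk]
  have hsuf : ∀ k j, u.length + x.length ≤ k → j = k + v.length + y.length →
      (s ++ s)[k]? = z[j]? := by
    rintro k _ hk rfl
    rw [← hsq, hz, getElem?_pumpDown_right hk]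
  have hper : ∀ k < s.length, (s ++ s)[k]? = (s ++ s)[k + s.length]? :=
    fun _ hk => getElem?_append_self hk
  refine hab (Option.some_injective _ ?_)
  -- Wherever the window `vxy` lies, two positions of `uxw` that are `|s|` apart carry an `a`
  -- and a `b` of `z`.
  rcases le_or_gt (u.length + v.length + x.length + y.length) (2 * n) with hleft | hright
  · calc some a = z[2 * n]? := (hz_a _ (by omega)).symm
      _ = (s ++ s)[2 * n - (v.length + y.length)]? := (hsuf _ _ (by omega) (by omega)).symm
      _ = (s ++ s)[2 * n - (v.length + y.length) + s.length]? := hper _ (by omega)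
      _ = z[2 * n + s.length]? := hsuf _ _ (by omega) (by omega)
      _ = some b := hz_b _ (by omega)
  rcases le_or_gt (2 * n) u.length with hright' | hmid
  · calc some a = z[2 * n - 1 - s.length]? := (hz_a _ (by omega)).symm
      _ = (s ++ s)[2 * n - 1 - s.length]? := (hpre _ _ (by omega) rfl).symm
      _ = (s ++ s)[2 * n - 1 - s.length + s.length]? := hper _ (by omega)
      _ = z[2 * n - 1]? := hpre _ _ (by omega) (by omega)
      _ = some b := hz_b _ (by omega)
  · calc some a = z[n - 1]? := (hz_a _ (by omega)).symm
      _ = (s ++ s)[n - 1]? := (hpre _ _ (by omega) rfl).symm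
      _ = (s ++ s)[n - 1 + s.length]? := hper _ (by omega)
      _ = z[n - 1 + s.length + v.length + y.length]? := hsuf _ _ (by omega) rfl
      _ = some b := hz_b _ (by omega)

theorem not_isContextFree_copyLanguage [Nontrivial α] : ¬ (copyLanguage α).IsContextFree := by
  intro hL
  obtain ⟨a, b, hab⟩ := exists_pair_ne α
  obtain ⟨p, hp⟩ := hL.exists_pump_down
  obtain ⟨u, v, x, y, w, hz, hvxy, hvy, s, -, hsq⟩ :=
    hp (List.replicate (p + 1) a ++ List.replicate (p + 1) b ++
      (List.replicate (p + 1) a ++ List.replicate (p + 1) b)) ⟨_, by simp, rfl⟩ (by simp; omega)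
  exact pumpDown_replicate_ne_square hab hz (by omega) hvy s hsq

end CopyLanguage

/-- For the regular language L = (00 + 11)⁺ over Fin 2, the binary decimation
bd(L) is the (non-context-free) copy language {ww : w ≠ ε}; hence neither the
regular nor the context-free languages are closed under bd. -/
theorem bd_copy_language :
    bdLang {w : List (Fin 2) | ∃ l : List (List (Fin 2)), l ≠ [] ∧
        (∀ u ∈ l, u = [0, 0] ∨ u = [1, 1]) ∧ w = l.flatten} =
      {z : List (Fin 2) | ∃ w : List (Fin 2), w ≠ [] ∧ z = w ++ w} ∧
    ¬ Language.IsContextFree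
        {z : List (Fin 2) | ∃ w : List (Fin 2), w ≠ [] ∧ z = w ++ w} ∧
    ¬ (∀ L : Language (Fin 2), L.IsRegular → (bdLang L).IsRegular) ∧
    ¬ (∀ L : Language (Fin 2), L.IsContextFree → (bdLang L).IsContextFree) := by
  have hbd : bdLang {w : List (Fin 2) | ∃ l : List (List (Fin 2)), l ≠ [] ∧
      (∀ u ∈ l, u = [0, 0] ∨ u = [1, 1]) ∧ w = l.flatten} = copyLanguage (Fin 2) := by
    rw [setOf_flatten_pairs_eq]
    exact bdLang_doubleLetters
  have hreg := setOf_flatten_pairs_eq ▸ isRegular_doubleLetters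
  refine ⟨hbd, not_isContextFree_copyLanguage, fun h => ?_, fun h => ?_⟩
  · exact not_isContextFree_copyLanguage (hbd ▸ h _ hreg).isContextFree
  · exact not_isContextFree_copyLanguage (hbd ▸ h _ hreg.isContextFree)
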